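/- arXiv:2505.01826 — 4 statements merged into one kernel-verified Lean document; each statement's English description precedes it below -/
import Mathlib

section
/- Let G and Q be groups, ρ: G → Q a surjective group homomorphism with kernel K, and 𝕜 a field. Let π: Q⁴ → 𝕜ˣ be a normalized 4-cocycle and ω: G³ → 𝕜ˣ a normalized 3-cochain satisfying dω = ρ*π. For g ∈ G and k,l ∈ K define ψ_g(k,l) := ω(kg⁻¹, g, lg⁻¹)·ω(k,l,g⁻¹)·ω(g, kg⁻¹, glg⁻¹)⁻¹·ω(k, g⁻¹, g)⁻¹. Then for all g ∈ G and all k,l,m ∈ K the following identity holds: ψ_g(l,m)·ψ_g(k, lm)·ω(k,l,m) = ω(gkg⁻¹, glg⁻¹, gmg⁻¹)·ψ_g(k,l)·ψ_g(kl, m). -/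
/-!
The identity is a combination of five instances of `dω = ρ*π`, at
`(k,l,m,g⁻¹)`, `(k,lg⁻¹,g,mg⁻¹)`, `(k,l,g⁻¹,g)`, `(kg⁻¹,g,lg⁻¹,gmg⁻¹)` and `(g,kg⁻¹,glg⁻¹,gmg⁻¹)`.
Each of these quadruples has its first or last entry in the normal subgroup `K = ker ρ`, so the
normalized `π` contributes nothing and `ω` satisfies the plain 3-cocycle relation there; the
relations then multiply out to the identity in the abelian group of values.
-/

namespace GroupCochain

variable {G A : Type*} [Group G] [CommGroup A]

def IsCocycleAt (ω : G → G → G → A) (x y z w : G) : Prop :=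
  ω y z w * ω x (y * z) w * ω x y z = ω (x * y) z w * ω x y (z * w)

/-- The cochain `ψ_g(k,l)` of the paper. -/
def conjTwist (ω : G → G → G → A) (g k l : G) : A :=
  ω (k * g⁻¹) g (l * g⁻¹) * ω k l g⁻¹ * (ω g (k * g⁻¹) (g * l * g⁻¹))⁻¹ * (ω k g⁻¹ g)⁻¹

theorem isCocycleAt_of_coboundary_eq_pullback {Q : Type*} [Group Q] (ρ : G →* Q)
    {π : Q → Q → Q → Q → A} (hπ : ∀ a b c d : Q, (a = 1 ∨ b = 1 ∨ c = 1 ∨ d = 1) → π a b c d = 1)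
    {ω : G → G → G → A}
    (hdω : ∀ x y z w : G, ω y z w * ω x (y * z) w * ω x y z
      = π (ρ x) (ρ y) (ρ z) (ρ w) * ω (x * y) z w * ω x y (z * w))
    {x y z w : G} (h : ρ x = 1 ∨ ρ y = 1 ∨ ρ z = 1 ∨ ρ w = 1) : IsCocycleAt ω x y z w := by
  rw [IsCocycleAt, hdω, hπ _ _ _ _ h, one_mul]

theorem conjTwist_twistedCocycle (K : Subgroup G) [K.Normal] {ω : G → G → G → A}
    (hω : ∀ x y : G, ω x y 1 = 1) (hK : ∀ x y z w : G, x ∈ K ∨ w ∈ K → IsCocycleAt ω x y z w)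
    (g : G) {k l m : G} (hk : k ∈ K) (hm : m ∈ K) :
    conjTwist ω g l m * conjTwist ω g k (l * m) * ω k l m
      = ω (g * k * g⁻¹) (g * l * g⁻¹) (g * m * g⁻¹) * conjTwist ω g k l
          * conjTwist ω g (k * l) m := by
  have hm' : g * m * g⁻¹ ∈ K := ‹K.Normal›.conj_mem m hm g
  have hA := hK k l m g⁻¹ (.inl hk)
  have hC := hK (k * g⁻¹) g (l * g⁻¹) (g * m * g⁻¹) (.inr hm')
  have hD := hK g (k * g⁻¹) (g * l * g⁻¹) (g * m * g⁻¹) (.inr hm')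
  have hE := hK k (l * g⁻¹) g (m * g⁻¹) (.inl hk)
  have hF := hK k l g⁻¹ g (.inl hk)
  simp only [IsCocycleAt, conjTwist, mul_assoc, inv_mul_cancel, mul_one,
    inv_mul_cancel_left, hω] at *
  -- `abel` combines the relations once the abelian group of values is written additively
  apply Additive.ofMul.injective
  apply_fun Additive.ofMul at hA hC hD hE hF
  simp only [ofMul_mul, ofMul_inv] at *
  linear_combination (norm := abel) hA - hC + hD + hE - hF

end GroupCochain

open GroupCochain in
theorem psi_monoidality_identity_general
    {G Q : Type*} [Group G] [Group Q] {𝕜 : Type*} [Field 𝕜]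
    (ρ : G →* Q)
    (π : Q → Q → Q → Q → 𝕜ˣ)
    (hπnorm : ∀ a b c d : Q, (a = 1 ∨ b = 1 ∨ c = 1 ∨ d = 1) → π a b c d = 1)
    (ω : G → G → G → 𝕜ˣ)
    (hωnorm : ∀ x y z : G, (x = 1 ∨ y = 1 ∨ z = 1) → ω x y z = 1)
    (hdω : ∀ x y z w : G,
      ω y z w * ω x (y * z) w * ω x y z
        = π (ρ x) (ρ y) (ρ z) (ρ w) * ω (x * y) z w * ω x y (z * w))
    (ψ : G → G → G → 𝕜ˣ)
    (hψ : ∀ g k l : G, ψ g k l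
      = ω (k * g⁻¹) g (l * g⁻¹) * ω k l g⁻¹
          * (ω g (k * g⁻¹) (g * l * g⁻¹))⁻¹ * (ω k g⁻¹ g)⁻¹) :
    ∀ g : G, ∀ k l m : G, k ∈ ρ.ker → l ∈ ρ.ker → m ∈ ρ.ker →
      ψ g l m * ψ g k (l * m) * ω k l m
        = ω (g * k * g⁻¹) (g * l * g⁻¹) (g * m * g⁻¹) * ψ g k l * ψ g (k * l) m := by
  obtain rfl : ψ = conjTwist ω := funext₃ hψ
  intro g k l m hk _ hm
  refine conjTwist_twistedCocycle ρ.ker (fun x y => hωnorm x y 1 (.inr (.inr rfl)))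
    (fun x y z w h => ?_) g hk hm
  exact isCocycleAt_of_coboundary_eq_pullback ρ hπnorm hdω
    (h.imp_right fun hw => .inr (.inr hw))

/-- The scalar identity expressing monoidality of the autoequivalence
`q_*` of the twisted crossed product `𝒞 ⋊_ω K` (Lemma 3.2 of the paper): with
`ψ_g(k,l) = ω(kg⁻¹,g,lg⁻¹)·ω(k,l,g⁻¹)·ω(g,kg⁻¹,glg⁻¹)⁻¹·ω(k,g⁻¹,g)⁻¹`, for all
`g ∈ G` and `k,l,m ∈ K = ker ρ` one has
`ψ_g(l,m)·ψ_g(k,lm)·ω(k,l,m) = ω(gkg⁻¹,glg⁻¹,gmg⁻¹)·ψ_g(k,l)·ψ_g(kl,m)`. -/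
theorem psi_monoidality_identity
    {G Q : Type*} [Group G] [Group Q] {𝕜 : Type*} [Field 𝕜]
    (ρ : G →* Q) (hρ : Function.Surjective ρ)
    (π : Q → Q → Q → Q → 𝕜ˣ)
    (hπnorm : ∀ a b c d : Q, (a = 1 ∨ b = 1 ∨ c = 1 ∨ d = 1) → π a b c d = 1)
    (hπcoc : ∀ g₁ g₂ g₃ g₄ g₅ : Q,
      π g₂ g₃ g₄ g₅ * π g₁ (g₂ * g₃) g₄ g₅ * π g₁ g₂ g₃ (g₄ * g₅)
        = π (g₁ * g₂) g₃ g₄ g₅ * π g₁ g₂ (g₃ * g₄) g₅ * π g₁ g₂ g₃ g₄)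
    (ω : G → G → G → 𝕜ˣ)
    (hωnorm : ∀ x y z : G, (x = 1 ∨ y = 1 ∨ z = 1) → ω x y z = 1)
    (hdω : ∀ x y z w : G,
      ω y z w * ω x (y * z) w * ω x y z
        = π (ρ x) (ρ y) (ρ z) (ρ w) * ω (x * y) z w * ω x y (z * w))
    (ψ : G → G → G → 𝕜ˣ)
    (hψ : ∀ g k l : G, ψ g k l
      = ω (k * g⁻¹) g (l * g⁻¹) * ω k l g⁻¹
          * (ω g (k * g⁻¹) (g * l * g⁻¹))⁻¹ * (ω k g⁻¹ g)⁻¹) :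
    ∀ g : G, ∀ k l m : G, k ∈ ρ.ker → l ∈ ρ.ker → m ∈ ρ.ker →
      ψ g l m * ψ g k (l * m) * ω k l m
        = ω (g * k * g⁻¹) (g * l * g⁻¹) (g * m * g⁻¹) * ψ g k l * ψ g (k * l) m :=
  psi_monoidality_identity_general ρ π hπnorm ω hωnorm hdω ψ hψ
end

section
/- Let n ≥ 1, let Q be a group, and let G be a group with a surjective homomorphism ρ: G → Q whose kernel A is central in G, together with a group isomorphism φ from A to the additive group ZMod n. Let s: Q → G be a section of ρ with ρ ∘ s = id_Q and s(1) = 1, and let σ̄: Q × Q → ZMod n be given by σ̄(q,r) := φ(s(q)s(r)s(qr)⁻¹). Let c': Q × Q → ZMod n be any 2-cocycle (trivial action, additive notation). Then the pulled-back 4-cochain ρ*(σ̄ ⌣ c') is a coboundary: there exists ω: G³ → ZMod n such that for all x,y,z,w ∈ G, ω(y,z,w) − ω(xy,z,w) + ω(x,yz,w) − ω(x,y,zw) + ω(x,y,z) = σ̄(ρ(x),ρ(y))·c'(ρ(z),ρ(w)). -/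
/-!
The coordinate `f x := φ (x · s(ρ x)⁻¹)` of `x` in the central kernel satisfies
`f (x y) = f x + f y + σ̄(ρ x, ρ y)`, i.e. `ρ*σ̄ = -δf`. Since `ρ*c'` is a cocycle, the
Leibniz rule `δ(f ⌣ ρ*c') = δf ⌣ ρ*c'` shows that `ω := -(f ⌣ ρ*c')` bounds `ρ*(σ̄ ⌣ c')`.
-/

theorem exists_coboundary_eq_cup_of_map_mul_eq {M R : Type*} [Mul M] [CommRing R]
    (f : M → R) (b c : M → M → R) (hf : ∀ x y, f (x * y) = f x + f y + b x y)
    (hc : ∀ x y z, c y z - c (x * y) z + c x (y * z) - c x y = 0) :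
    ∃ ω : M → M → M → R, ∀ x y z w : M,
      ω y z w - ω (x * y) z w + ω x (y * z) w - ω x y (z * w) + ω x y z = b x y * c z w :=
  ⟨fun x y z => -(f x * c y z), fun x y z w => by
    linear_combination c z w * hf x y + f x * hc y z w⟩

section KerComponent

variable {G Q : Type*} [Group G] [Group Q] (ρ : G →* Q) {s : Q → G}

theorem mul_inv_section_mem_ker (hs : ∀ q, ρ (s q) = q) (x : G) : x * (s (ρ x))⁻¹ ∈ ρ.ker := by
  simp [MonoidHom.mem_ker, hs]

def kerComponent (hs : ∀ q, ρ (s q) = q) (x : G) : ρ.ker :=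
  ⟨x * (s (ρ x))⁻¹, mul_inv_section_mem_ker ρ hs x⟩

theorem coe_kerComponent_mul (hs : ∀ q, ρ (s q) = q) (hcentral : ρ.ker ≤ Subgroup.center G)
    (x y : G) :
    (kerComponent ρ hs (x * y) : G) =
      kerComponent ρ hs x * kerComponent ρ hs y * (s (ρ x) * s (ρ y) * (s (ρ x * ρ y))⁻¹) := by
  have hy : y * (s (ρ y))⁻¹ * s (ρ x) = s (ρ x) * (y * (s (ρ y))⁻¹) :=
    ((Subgroup.mem_center_iff.mp (hcentral (mul_inv_section_mem_ker ρ hs y))) (s (ρ x))).symm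
  calc x * y * (s (ρ (x * y)))⁻¹
      = x * (s (ρ x))⁻¹ * (s (ρ x) * (y * (s (ρ y))⁻¹)) * (s (ρ y) * (s (ρ x * ρ y))⁻¹) := by
        rw [map_mul]; group
    _ = x * (s (ρ x))⁻¹ * (y * (s (ρ y))⁻¹) * (s (ρ x) * s (ρ y) * (s (ρ x * ρ y))⁻¹) := by
        rw [← hy]; group

theorem toAdd_kerComponent_mul {A : Type*} [AddGroup A] (hs : ∀ q, ρ (s q) = q)
    (hcentral : ρ.ker ≤ Subgroup.center G)
    (φ : ρ.ker ≃* Multiplicative A) (σbar : Q → Q → A)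
    (hσbar : ∀ q r : Q, ((φ.symm (Multiplicative.ofAdd (σbar q r)) : ρ.ker) : G)
      = s q * s r * (s (q * r))⁻¹) (x y : G) :
    (φ (kerComponent ρ hs (x * y))).toAdd =
      (φ (kerComponent ρ hs x)).toAdd + (φ (kerComponent ρ hs y)).toAdd + σbar (ρ x) (ρ y) := by
  have hk : kerComponent ρ hs (x * y) =
      kerComponent ρ hs x * kerComponent ρ hs y * φ.symm (.ofAdd (σbar (ρ x) (ρ y))) := by
    ext
    simp only [Subgroup.coe_mul, hσbar, coe_kerComponent_mul ρ hs hcentral]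
  simp [hk]

end KerComponent

theorem pullback_of_cup_product_along_central_extension_is_coboundary_general
    (n : ℕ)
    {G Q : Type*} [Group G] [Group Q]
    (ρ : G →* Q)
    (hcentral : ρ.ker ≤ Subgroup.center G)
    (φ : ρ.ker ≃* Multiplicative (ZMod n))
    (s : Q → G) (hs : ∀ q : Q, ρ (s q) = q)
    (σbar : Q → Q → ZMod n)
    (hσbar : ∀ q r : Q,
      ((φ.symm (Multiplicative.ofAdd (σbar q r)) : ρ.ker) : G)
        = s q * s r * (s (q * r))⁻¹)
    (c' : Q → Q → ZMod n)
    (hc' : ∀ q r t : Q, c' r t - c' (q * r) t + c' q (r * t) - c' q r = 0) :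
    ∃ ω : G → G → G → ZMod n, ∀ x y z w : G,
      ω y z w - ω (x * y) z w + ω x (y * z) w - ω x y (z * w) + ω x y z
        = σbar (ρ x) (ρ y) * c' (ρ z) (ρ w) :=
  exists_coboundary_eq_cup_of_map_mul_eq (fun x => (φ (kerComponent ρ hs x)).toAdd)
    (fun x y => σbar (ρ x) (ρ y)) (fun x y => c' (ρ x) (ρ y))
    (toAdd_kerComponent_mul ρ hs hcentral φ σbar hσbar)
    (fun x y z => by simpa only [map_mul] using hc' (ρ x) (ρ y) (ρ z))

/-- Let `G` be a central extension of `Q` by `ZMod n` (the kernel `A`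
of `ρ : G → Q` is central and identified with `ZMod n` by an isomorphism `φ`), let `s`
be a normalized section with factor set `σ̄(q,r) = φ(s(q)s(r)s(qr)⁻¹)`, and let `c'` be
any `ZMod n`-valued 2-cocycle on `Q`. Then the pulled-back 4-cochain `ρ*(σ̄ ⌣ c')` is
a coboundary (the recipe at the end of Section 4.2 of the paper). -/
theorem pullback_of_cup_product_along_central_extension_is_coboundary
    (n : ℕ) (hn : 1 ≤ n)
    {G Q : Type*} [Group G] [Group Q]
    (ρ : G →* Q) (hρ : Function.Surjective ρ)
    (hcentral : ρ.ker ≤ Subgroup.center G)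
    (φ : ρ.ker ≃* Multiplicative (ZMod n))
    (s : Q → G) (hs : ∀ q : Q, ρ (s q) = q) (hs1 : s 1 = 1)
    (σbar : Q → Q → ZMod n)
    (hσbar : ∀ q r : Q,
      ((φ.symm (Multiplicative.ofAdd (σbar q r)) : ρ.ker) : G)
        = s q * s r * (s (q * r))⁻¹)
    (c' : Q → Q → ZMod n)
    (hc' : ∀ q r t : Q, c' r t - c' (q * r) t + c' q (r * t) - c' q r = 0) :
    ∃ ω : G → G → G → ZMod n, ∀ x y z w : G,
      ω y z w - ω (x * y) z w + ω x (y * z) w - ω x y (z * w) + ω x y z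
        = σbar (ρ x) (ρ y) * c' (ρ z) (ρ w) :=
  pullback_of_cup_product_along_central_extension_is_coboundary_general n ρ hcentral φ s hs σbar
    hσbar c' hc'
end

section
/- Let α be a type, F = FreeGroup α the free group on α, Q a group, ρ: F → Q a surjective group homomorphism with kernel K, and 𝕜 a field. Let π: Q⁴ → 𝕜ˣ be a normalized 4-cocycle. Then there exists a normalized 3-cochain ω: F³ → 𝕜ˣ such that dω = ρ*π, i.e. ω(y,z,w)·ω(x,yz,w)·ω(x,y,z) = π(ρ(x),ρ(y),ρ(z),ρ(w))·ω(xy,z,w)·ω(x,y,zw) for all x,y,z,w ∈ F, and moreover ω(k₁,k₂,k₃) = 1 whenever k₁,k₂,k₃ ∈ K. -/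
/-!
Over a free group every 2-cocycle `f` with coefficients in a module `M` is a coboundary: the
group law `(m, g) * (n, h) = (m + g • n + f (g, h), g * h)` on `M × G` is associative exactly
because `f` is a cocycle, a section of the projection to `G` is obtained by lifting the basis,
and the `M`-component of this section trivializes `f`.

Higher degrees reduce to this by currying the last argument: an `n`-cochain is a 1-cochain and an
`(n+1)`-cochain a 2-cochain with values in the `(n-1)`-cochains, and for a suitable `G`-action on
the normalized `(n-1)`-cochains, normalized `(n+1)`-cocycles become 2-cocycles.

So `ρ*π = dω₀` on `F`. The restriction of `ω₀` to `K = ker ρ` is then a 3-cocycle on the free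
group `K` (Nielsen–Schreier), hence equals `dτ`, and `ω = ω₀ - d(τ extended by zero)` still has
`dω = ρ*π` and vanishes on `K`.
-/

open groupCohomology

namespace GroupCochain

section Extension

variable {G M : Type*} [Group G] [AddCommGroup M] [DistribMulAction G M]

@[ext]
structure CocycleExtension (f : G × G → M) where
  fst : M
  snd : G

namespace CocycleExtension

variable {f : G × G → M}

instance : Mul (CocycleExtension f) :=
  ⟨fun a b => ⟨a.fst + a.snd • b.fst + f (a.snd, b.snd), a.snd * b.snd⟩⟩

instance : One (CocycleExtension f) := ⟨⟨-f (1, 1), 1⟩⟩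

instance : Inv (CocycleExtension f) :=
  ⟨fun a => ⟨-(a.snd⁻¹ • a.fst + f (a.snd⁻¹, a.snd) + f (1, 1)), a.snd⁻¹⟩⟩

@[simp] theorem mul_fst (a b : CocycleExtension f) :
    (a * b).fst = a.fst + a.snd • b.fst + f (a.snd, b.snd) := rfl

@[simp] theorem mul_snd (a b : CocycleExtension f) : (a * b).snd = a.snd * b.snd := rfl

omit [DistribMulAction G M] in
@[simp] theorem one_fst : (1 : CocycleExtension f).fst = -f (1, 1) := rfl

omit [DistribMulAction G M] in
@[simp] theorem one_snd : (1 : CocycleExtension f).snd = 1 := rfl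

@[simp] theorem inv_fst (a : CocycleExtension f) :
    a⁻¹.fst = -(a.snd⁻¹ • a.fst + f (a.snd⁻¹, a.snd) + f (1, 1)) := rfl

@[simp] theorem inv_snd (a : CocycleExtension f) : a⁻¹.snd = a.snd⁻¹ := rfl

abbrev group (hf : IsCocycle₂ f) : Group (CocycleExtension f) :=
  Group.ofLeftAxioms
    (fun a b c => by
      ext
      · simp only [mul_fst, mul_snd, smul_add, mul_smul]
        linear_combination (norm := abel) hf a.snd b.snd c.snd
      · exact mul_assoc a.snd b.snd c.snd)
    (fun a => by
      ext <;> simp [map_one_fst_of_isCocycle₂ hf])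
    (fun a => by
      ext
      · simp only [mul_fst, inv_fst, inv_snd, one_fst]
        abel
      · exact inv_mul_cancel a.snd)

end CocycleExtension

theorem isCoboundary₂_of_isCocycle₂ [IsFreeGroup G] {f : G × G → M} (hf : IsCocycle₂ f) :
    IsCoboundary₂ f := by
  let := CocycleExtension.group hf
  let s : G →* CocycleExtension f := IsFreeGroup.lift fun b => ⟨0, IsFreeGroup.of b⟩
  let p : CocycleExtension f →* G := ⟨⟨CocycleExtension.snd, rfl⟩, fun _ _ => rfl⟩
  have hps : p.comp s = MonoidHom.id G := IsFreeGroup.ext_hom fun b => by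
    simp [s, p, IsFreeGroup.lift_of]
  have hs (g : G) : (s g).snd = g := DFunLike.congr_fun hps g
  refine ⟨fun g => -(s g).fst, fun g h => ?_⟩
  have hmul := congrArg CocycleExtension.fst (map_mul s g h)
  rw [CocycleExtension.mul_fst, hs, hs] at hmul
  dsimp only
  rw [hmul, smul_neg]
  abel

end Extension

section Cochains

variable {G H A : Type*} [Group G] [Group H] [AddCommGroup A]

def coboundary₂ (τ : G → G → A) (x y z : G) : A :=
  τ y z - τ (x * y) z + τ x (y * z) - τ x y

def coboundary₃ (ω : G → G → G → A) (x y z w : G) : A :=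
  ω y z w - ω (x * y) z w + ω x (y * z) w - ω x y (z * w) + ω x y z

def coboundary₄ (φ : G → G → G → G → A) (x y z w v : G) : A :=
  φ y z w v - φ (x * y) z w v + φ x (y * z) w v - φ x y (z * w) v + φ x y z (w * v) - φ x y z w

def IsNormalized₂ (τ : G → G → A) : Prop :=
  ∀ x y, (x = 1 ∨ y = 1) → τ x y = 0

def IsNormalized₃ (ω : G → G → G → A) : Prop :=
  ∀ x y z, (x = 1 ∨ y = 1 ∨ z = 1) → ω x y z = 0

def IsNormalized₄ (φ : G → G → G → G → A) : Prop :=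
  ∀ x y z w, (x = 1 ∨ y = 1 ∨ z = 1 ∨ w = 1) → φ x y z w = 0

theorem coboundary₃_coboundary₂ (τ : G → G → A) (x y z w : G) :
    coboundary₃ (coboundary₂ τ) x y z w = 0 := by
  simp only [coboundary₃, coboundary₂, mul_assoc]
  abel

theorem coboundary₃_comp (f : H →* G) (ω : G → G → G → A) (x y z w : H) :
    coboundary₃ (fun a b c => ω (f a) (f b) (f c)) x y z w =
      coboundary₃ ω (f x) (f y) (f z) (f w) := by
  simp only [coboundary₃, map_mul]

theorem coboundary₄_comp (f : H →* G) (φ : G → G → G → G → A) (x y z w v : H) :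
    coboundary₄ (fun a b c d => φ (f a) (f b) (f c) (f d)) x y z w v =
      coboundary₄ φ (f x) (f y) (f z) (f w) (f v) := by
  simp only [coboundary₄, map_mul]

theorem IsNormalized₂.coboundary₂ {τ : G → G → A} (hτ : IsNormalized₂ τ) :
    IsNormalized₃ (coboundary₂ τ) := by
  rintro x y z (rfl | rfl | rfl) <;>
    simp [GroupCochain.coboundary₂, hτ 1 _ (.inl rfl), hτ _ 1 (.inr rfl)]

theorem IsNormalized₃.comp {ω : G → G → G → A} (hω : IsNormalized₃ ω) (f : H →* G) :
    IsNormalized₃ (fun a b c => ω (f a) (f b) (f c)) := by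
  rintro x y z (rfl | rfl | rfl) <;> exact hω _ _ _ (by simp)

theorem IsNormalized₄.comp {φ : G → G → G → G → A} (hφ : IsNormalized₄ φ) (f : H →* G) :
    IsNormalized₄ (fun a b c d => φ (f a) (f b) (f c) (f d)) := by
  rintro x y z w (rfl | rfl | rfl | rfl) <;> exact hφ _ _ _ _ (by simp)

end Cochains

section DimensionShift

variable {G A : Type*} [Group G] [AddCommGroup A]

variable (G A) in
def normalizedCochains₁ : AddSubgroup (G → A) where
  carrier := {f | f 1 = 0}
  add_mem' hf hg := by simp_all
  zero_mem' := rfl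
  neg_mem' hf := by simp_all

variable (G A) in
def normalizedCochains₂ : AddSubgroup (G → G → A) where
  carrier := {τ | IsNormalized₂ τ}
  add_mem' hτ hσ x y h := by simp [hτ x y h, hσ x y h]
  zero_mem' _ _ _ := rfl
  neg_mem' hτ x y h := by simp [hτ x y h]

namespace normalizedCochains₁

instance : SMul G (normalizedCochains₁ G A) :=
  ⟨fun y f => ⟨fun x => f.1 (x * y) - f.1 y,
    show f.1 (1 * y) - f.1 y = 0 by rw [one_mul, sub_self]⟩⟩

theorem smul_apply (y : G) (f : normalizedCochains₁ G A) (x : G) :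
    (y • f).1 x = f.1 (x * y) - f.1 y := rfl

instance : DistribMulAction G (normalizedCochains₁ G A) where
  one_smul f := Subtype.ext <| funext fun x => by
    simp [smul_apply, show f.1 1 = 0 from f.2]
  mul_smul y y' f := Subtype.ext <| funext fun x => by
    simp only [smul_apply, mul_assoc]
    abel
  smul_zero _ := Subtype.ext <| funext fun x => by simp [smul_apply]
  smul_add y f g := Subtype.ext <| funext fun x => by
    simp only [smul_apply, AddSubgroup.coe_add, Pi.add_apply]
    abel

end normalizedCochains₁

namespace normalizedCochains₂

instance : SMul G (normalizedCochains₂ G A) :=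
  ⟨fun z τ => ⟨fun x y => τ.1 y z + τ.1 x (y * z) - τ.1 (x * y) z, by
    rintro x y (rfl | rfl) <;> simp [τ.2 1 _ (.inl rfl)]⟩⟩

theorem smul_apply (z : G) (τ : normalizedCochains₂ G A) (x y : G) :
    (z • τ).1 x y = τ.1 y z + τ.1 x (y * z) - τ.1 (x * y) z := rfl

instance : DistribMulAction G (normalizedCochains₂ G A) where
  one_smul τ := Subtype.ext <| funext₂ fun x y => by
    simp [smul_apply, τ.2 _ 1 (.inr rfl)]
  mul_smul z z' τ := Subtype.ext <| funext₂ fun x y => by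
    simp only [smul_apply, mul_assoc]
    abel
  smul_zero _ := Subtype.ext <| funext₂ fun x y => by simp [smul_apply]
  smul_add z τ σ := Subtype.ext <| funext₂ fun x y => by
    simp only [smul_apply, AddSubgroup.coe_add, Pi.add_apply]
    abel

end normalizedCochains₂

theorem exists_isNormalized₂_coboundary₂_eq [IsFreeGroup G] {θ : G → G → G → A}
    (hθ : IsNormalized₃ θ) (hdθ : ∀ x y z w, coboundary₃ θ x y z w = 0) :
    ∃ τ : G → G → A, IsNormalized₂ τ ∧ ∀ x y z, coboundary₂ τ x y z = θ x y z := by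
  let Φ : G × G → normalizedCochains₁ G A :=
    fun p => ⟨fun x => θ x p.1 p.2, hθ 1 _ _ (.inl rfl)⟩
  have hΦ : IsCocycle₂ Φ := fun g h j => Subtype.ext <| funext fun x => by
    have := hdθ x g h j
    simp only [coboundary₃] at this
    simp only [Φ, AddSubgroup.coe_add, Pi.add_apply, normalizedCochains₁.smul_apply]
    linear_combination (norm := abel) this
  obtain ⟨Ω, hΩ⟩ := isCoboundary₂_of_isCocycle₂ hΦ
  have hΦ₁ : Φ (1, 1) = 0 := Subtype.ext <| funext fun x => hθ x 1 1 (.inr (.inl rfl))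
  have hΩ₁ : Ω 1 = 0 := by simpa [hΦ₁] using hΩ 1 1
  refine ⟨fun x z => -(Ω z).1 x, ?_, fun x y z => ?_⟩
  · rintro x z (rfl | rfl)
    · simp [show (Ω z).1 1 = 0 from (Ω z).2]
    · simp [hΩ₁]
  · have := congrArg (fun f => f.1 x) (hΩ y z)
    simp only [Φ, AddSubgroup.coe_add, AddSubgroup.coe_sub, Pi.add_apply, Pi.sub_apply,
      normalizedCochains₁.smul_apply] at this
    simp only [coboundary₂]
    rw [← this]
    abel

theorem exists_isNormalized₃_coboundary₃_eq [IsFreeGroup G] {φ : G → G → G → G → A}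
    (hφ : IsNormalized₄ φ) (hdφ : ∀ x y z w v, coboundary₄ φ x y z w v = 0) :
    ∃ ω : G → G → G → A, IsNormalized₃ ω ∧ ∀ x y z w, coboundary₃ ω x y z w = φ x y z w := by
  let Φ : G × G → normalizedCochains₂ G A :=
    fun p => ⟨fun x y => φ x y p.1 p.2, fun x y h => hφ _ _ _ _ (by tauto)⟩
  have hΦ : IsCocycle₂ Φ := fun g h j => Subtype.ext <| funext₂ fun x y => by
    have := hdφ x y g h j
    simp only [coboundary₄] at this
    simp only [Φ, AddSubgroup.coe_add, Pi.add_apply, normalizedCochains₂.smul_apply]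
    linear_combination (norm := abel) -this
  obtain ⟨Ω, hΩ⟩ := isCoboundary₂_of_isCocycle₂ hΦ
  have hΦ₁ : Φ (1, 1) = 0 :=
    Subtype.ext <| funext₂ fun x y => hφ x y 1 1 (.inr (.inr (.inl rfl)))
  have hΩ₁ : Ω 1 = 0 := by simpa [hΦ₁] using hΩ 1 1
  refine ⟨fun x y z => (Ω z).1 x y, ?_, fun x y z w => ?_⟩
  · rintro x y z (rfl | rfl | rfl)
    · exact (Ω z).2 1 y (.inl rfl)
    · exact (Ω z).2 x 1 (.inr rfl)
    · simp [hΩ₁]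
  · have := congrArg (fun f => f.1 x y) (hΩ z w)
    simp only [Φ, AddSubgroup.coe_add, AddSubgroup.coe_sub, Pi.add_apply, Pi.sub_apply,
      normalizedCochains₂.smul_apply] at this
    simp only [coboundary₃]
    rw [← this]
    abel

end DimensionShift

section Relative

variable {G A : Type*} [Group G] [AddCommGroup A]

open Classical in
noncomputable def extendByZero (K : Subgroup G) (τ : K → K → A) (x y : G) : A :=
  if h : x ∈ K ∧ y ∈ K then τ ⟨x, h.1⟩ ⟨y, h.2⟩ else 0

section

variable {K : Subgroup G} {τ : K → K → A}

theorem extendByZero_coe (k₁ k₂ : K) : extendByZero K τ k₁ k₂ = τ k₁ k₂ := by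
  simp [extendByZero]

theorem IsNormalized₂.extendByZero (hτ : IsNormalized₂ τ) :
    IsNormalized₂ (GroupCochain.extendByZero K τ) := by
  rintro x y (rfl | rfl) <;> unfold GroupCochain.extendByZero <;> split_ifs
  · exact hτ _ _ (.inl rfl)
  · rfl
  · exact hτ _ _ (.inr rfl)
  · rfl

theorem coboundary₂_extendByZero (k₁ k₂ k₃ : K) :
    coboundary₂ (extendByZero K τ) k₁ k₂ k₃ = coboundary₂ τ k₁ k₂ k₃ := by
  simp only [coboundary₂, ← Subgroup.coe_mul, extendByZero_coe]

end

theorem exists_isNormalized₃_coboundary₃_eq_and_vanishing_on [IsFreeGroup G] (K : Subgroup G)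
    {φ : G → G → G → G → A} (hφ : IsNormalized₄ φ)
    (hdφ : ∀ x y z w v, coboundary₄ φ x y z w v = 0)
    (hφK : ∀ k₁ k₂ k₃ k₄ : K, φ k₁ k₂ k₃ k₄ = 0) :
    ∃ ω : G → G → G → A, IsNormalized₃ ω ∧ (∀ x y z w, coboundary₃ ω x y z w = φ x y z w) ∧
      ∀ k₁ k₂ k₃ : K, ω k₁ k₂ k₃ = 0 := by
  obtain ⟨ω₀, hω₀, hdω₀⟩ := exists_isNormalized₃_coboundary₃_eq hφ hdφ
  obtain ⟨τ, hτ, hdτ⟩ := exists_isNormalized₂_coboundary₂_eq (hω₀.comp K.subtype)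
    fun k₁ k₂ k₃ k₄ => by rw [coboundary₃_comp, hdω₀]; exact hφK k₁ k₂ k₃ k₄
  refine ⟨ω₀ - coboundary₂ (extendByZero K τ), fun x y z h => ?_, fun x y z w => ?_,
    fun k₁ k₂ k₃ => ?_⟩
  · simp [hω₀ x y z h, hτ.extendByZero.coboundary₂ x y z h]
  · have := coboundary₃_coboundary₂ (extendByZero K τ) x y z w
    simp only [coboundary₃, Pi.sub_apply] at this hdω₀ ⊢
    rw [← hdω₀]
    linear_combination (norm := abel) -this
  · simp [coboundary₂_extendByZero, hdτ]

end Relative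

end GroupCochain

open GroupCochain

theorem free_group_trivialization_vanishing_on_kernel_general
    {α : Type*} {Q : Type*} [Group Q] {𝕜 : Type*} [Field 𝕜]
    (ρ : FreeGroup α →* Q)
    (π : Q → Q → Q → Q → 𝕜ˣ)
    (hπnorm : ∀ a b c d : Q, (a = 1 ∨ b = 1 ∨ c = 1 ∨ d = 1) → π a b c d = 1)
    (hπcoc : ∀ g₁ g₂ g₃ g₄ g₅ : Q,
      π g₂ g₃ g₄ g₅ * π g₁ (g₂ * g₃) g₄ g₅ * π g₁ g₂ g₃ (g₄ * g₅)
        = π (g₁ * g₂) g₃ g₄ g₅ * π g₁ g₂ (g₃ * g₄) g₅ * π g₁ g₂ g₃ g₄) :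
    ∃ ω : FreeGroup α → FreeGroup α → FreeGroup α → 𝕜ˣ,
      (∀ x y z : FreeGroup α, (x = 1 ∨ y = 1 ∨ z = 1) → ω x y z = 1) ∧
      (∀ x y z w : FreeGroup α,
        ω y z w * ω x (y * z) w * ω x y z
          = π (ρ x) (ρ y) (ρ z) (ρ w) * ω (x * y) z w * ω x y (z * w)) ∧
      (∀ k₁ k₂ k₃ : FreeGroup α, k₁ ∈ ρ.ker → k₂ ∈ ρ.ker → k₃ ∈ ρ.ker →
        ω k₁ k₂ k₃ = 1) := by
  let π' : Q → Q → Q → Q → Additive 𝕜ˣ := fun a b c d => .ofMul (π a b c d)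
  have hπ' : IsNormalized₄ π' := fun a b c d h => congrArg Additive.ofMul (hπnorm a b c d h)
  have hdπ' (g₁ g₂ g₃ g₄ g₅ : Q) : coboundary₄ π' g₁ g₂ g₃ g₄ g₅ = 0 := by
    have := congrArg Additive.ofMul (hπcoc g₁ g₂ g₃ g₄ g₅)
    simp only [ofMul_mul] at this
    simp only [coboundary₄]
    linear_combination (norm := abel) this
  obtain ⟨ω, hω, hdω, hωK⟩ := exists_isNormalized₃_coboundary₃_eq_and_vanishing_on ρ.ker
    (hπ'.comp ρ) (fun x y z w v => by rw [coboundary₄_comp, hdπ'])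
    fun k₁ _ _ _ => hπ' _ _ _ _ (.inl k₁.2)
  refine ⟨fun x y z => (ω x y z).toMul, fun x y z h => congrArg Additive.toMul (hω x y z h),
    fun x y z w => ?_, fun k₁ k₂ k₃ h₁ h₂ h₃ =>
      congrArg Additive.toMul (hωK ⟨k₁, h₁⟩ ⟨k₂, h₂⟩ ⟨k₃, h₃⟩)⟩
  apply Additive.ofMul.injective
  have := hdω x y z w
  simp only [coboundary₃] at this
  simp only [ofMul_mul, ofMul_toMul]
  linear_combination (norm := abel) this

/-- For a surjection `ρ` from a free group `F = FreeGroup α` onto `Q`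
with kernel `K` and a normalized 4-cocycle `π` on `Q`, there is a normalized 3-cochain
`ω` on `F` with `dω = ρ*π` whose restriction to `K` is identically `1` (the
cohomological input to Corollary 4.1 of the paper). -/
theorem free_group_trivialization_vanishing_on_kernel
    {α : Type*} {Q : Type*} [Group Q] {𝕜 : Type*} [Field 𝕜]
    (ρ : FreeGroup α →* Q) (hρ : Function.Surjective ρ)
    (π : Q → Q → Q → Q → 𝕜ˣ)
    (hπnorm : ∀ a b c d : Q, (a = 1 ∨ b = 1 ∨ c = 1 ∨ d = 1) → π a b c d = 1)
    (hπcoc : ∀ g₁ g₂ g₃ g₄ g₅ : Q,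
      π g₂ g₃ g₄ g₅ * π g₁ (g₂ * g₃) g₄ g₅ * π g₁ g₂ g₃ (g₄ * g₅)
        = π (g₁ * g₂) g₃ g₄ g₅ * π g₁ g₂ (g₃ * g₄) g₅ * π g₁ g₂ g₃ g₄) :
    ∃ ω : FreeGroup α → FreeGroup α → FreeGroup α → 𝕜ˣ,
      (∀ x y z : FreeGroup α, (x = 1 ∨ y = 1 ∨ z = 1) → ω x y z = 1) ∧
      (∀ x y z w : FreeGroup α,
        ω y z w * ω x (y * z) w * ω x y z
          = π (ρ x) (ρ y) (ρ z) (ρ w) * ω (x * y) z w * ω x y (z * w)) ∧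
      (∀ k₁ k₂ k₃ : FreeGroup α, k₁ ∈ ρ.ker → k₂ ∈ ρ.ker → k₃ ∈ ρ.ker →
        ω k₁ k₂ k₃ = 1) :=
  free_group_trivialization_vanishing_on_kernel_general ρ π hπnorm hπcoc
end

section
/- Let Q be a finite group and p a prime. Consider the trivial Q-representations on the additive groups ZMod p and Additive ℂˣ (ℤ-modules), and the coefficient homomorphism ZMod p → Additive ℂˣ sending the residue class of 1 to the primitive p-th root of unity exp(2πi/p) (an injective homomorphism onto the p-th roots of unity). Assume the third group cohomology H³(Q, ℂˣ) (trivial action) is finite and its cardinality is coprime to p. Then the induced map on fourth group cohomology H⁴(Q, ZMod p) → H⁴(Q, ℂˣ) is injective. -/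
open groupCohomology

/-- The primitive `p`-th root of unity `exp(2πi/p)` as a unit of `ℂ`. -/
noncomputable def primitiveRootUnit (p : ℕ) : ℂˣ :=
  Units.mk0 (Complex.exp (2 * Real.pi * Complex.I / p)) (Complex.exp_ne_zero _)

/-- The coefficient homomorphism `ZMod p → Additive ℂˣ` sending the residue class of
`1` to the primitive `p`-th root of unity `exp(2πi/p)`. -/
noncomputable def rootCoeffHom (p : ℕ) : ZMod p →+ Additive ℂˣ :=
  ZMod.lift p ⟨zmultiplesHom (Additive ℂˣ) (Additive.ofMul (primitiveRootUnit p)), by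
    have hpow : primitiveRootUnit p ^ p = 1 := by
      rcases eq_or_ne p 0 with h | h
      · subst h; simp
      · ext
        rw [Units.val_pow_eq_pow_val]
        show Complex.exp (2 * Real.pi * Complex.I / p) ^ p = 1
        rw [← Complex.exp_nat_mul, mul_div_cancel₀ _ (by exact_mod_cast h : (p : ℂ) ≠ 0),
          Complex.exp_two_pi_mul_I]
    show (p : ℤ) • Additive.ofMul (primitiveRootUnit p) = 0
    rw [← ofMul_zpow]
    simp [hpow]⟩

/-- The map of inhomogeneous cochain complexes (the complexes computing group cohomology
with trivial coefficients) induced by the coefficient homomorphism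
`ZMod p → Additive ℂˣ`, `1 ↦ exp(2πi/p)`. -/
noncomputable def rootCoeffCochainsMap (p : ℕ) (Q : Type) [Group Q] :
    inhomogeneousCochains (Rep.trivial ℤ Q (ZMod p)) ⟶
      inhomogeneousCochains (Rep.trivial ℤ Q (Additive ℂˣ)) where
  f n := ModuleCat.ofHom ((rootCoeffHom p).toIntLinearMap.compLeft (Fin n → Q))
  comm' i j hij := by
    obtain rfl : j = i + 1 := hij.symm
    ext x : 2
    funext g
    rw [inhomogeneousCochains.d_def, inhomogeneousCochains.d_def]
    simp only [ModuleCat.hom_comp, LinearMap.comp_apply, ModuleCat.hom_ofHom,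
      inhomogeneousCochains.d_hom_apply, LinearMap.compLeft_apply, Function.comp_apply,
      map_add, map_sum, map_zsmul]
    rfl

/-! The Kummer sequence `0 → ZMod p → ℂˣ → ℂˣ → 0` (the last map being `u ↦ uᵖ`) of trivial
`Q`-modules is exact: `ℂˣ` is divisible and its `p`-torsion consists of the powers of
`exp(2πi/p)`. By its long exact cohomology sequence, the kernel of `H⁴(Q, ZMod p) → H⁴(Q, ℂˣ)` is
the image of the connecting map from `H³(Q, ℂˣ)`. That image is killed by `|H³(Q, ℂˣ)|`, and also
by `p` since all of `H⁴(Q, ZMod p)` is; as these are coprime, the image is zero. -/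

open CategoryTheory

universe w u

namespace groupCohomology

variable {k G : Type u} [CommRing k] [Group G]

lemma map_id_nsmul {A B : Rep k G} (φ : A ⟶ B) (m n : ℕ) :
    map (MonoidHom.id G) (m • φ) n = m • map (MonoidHom.id G) φ n :=
  (cochainsFunctor k G ⋙ HomologicalComplex.homologyFunctor _ _ n).map_nsmul

lemma nsmul_eq_zero_of_nsmul_id_eq_zero {A : Rep k G} {m : ℕ} (hA : m • 𝟙 A = 0) (n : ℕ)
    (x : groupCohomology A n) : m • x = 0 := by
  have h : map (MonoidHom.id G) (m • 𝟙 A) n = 0 := by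
    rw [hA]
    exact (functor k G n).map_zero _ _
  rw [map_id_nsmul, map_id] at h
  simpa using congr_arg (fun f => f.hom x) h

lemma map_injective_of_coprime_torsion {X : ShortComplex (Rep k G)} (hX : X.ShortExact)
    {i j : ℕ} (hij : i + 1 = j) {N m : ℕ} (hNm : N.Coprime m)
    (hN : ∀ y : groupCohomology X.X₃ i, N • y = 0)
    (hm : ∀ x : groupCohomology X.X₁ j, m • x = 0) :
    Function.Injective (map (MonoidHom.id G) X.f j) := by
  rw [injective_iff_map_eq_zero]
  intro x hx
  obtain ⟨y, rfl⟩ : x ∈ (δ hX i j hij).hom.range :=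
    (mapShortComplex₁_exact hX hij).moduleCat_range_eq_ker ▸ hx
  have hNx : N • (δ hX i j hij).hom y = 0 := by rw [← map_nsmul, hN, map_zero]
  exact AddMonoid.addOrderOf_eq_one_iff.mp (Nat.eq_one_of_dvd_coprimes hNm
    (addOrderOf_dvd_of_nsmul_eq_zero hNx) (addOrderOf_dvd_of_nsmul_eq_zero (hm _)))

end groupCohomology

-- Going through `forget₂` with `k` generic: at `k = ℤ` the two `Module ℤ` structures on a
-- representation clash and `forget₂ (Rep ℤ G) (ModuleCat ℤ)` does not elaborate.
lemma Rep.exact_of_ker_le_range {k G : Type u} [CommRing k] [Group G]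
    {S : ShortComplex (Rep.{w} k G)}
    (h : LinearMap.ker S.g.hom.toLinearMap ≤ LinearMap.range S.f.hom.toLinearMap) : S.Exact := by
  apply (forget₂ (Rep.{w} k G) (ModuleCat.{w} k)).reflects_exact_of_faithful
  rwa [ShortComplex.moduleCat_exact_iff_ker_sub_range]

lemma Rep.nsmul_id_trivial_zmod_eq_zero (p : ℕ) (G : Type*) [Group G] :
    p • 𝟙 (Rep.trivial ℤ G (ZMod p)) = 0 := by
  refine Rep.hom_ext (Representation.IntertwiningMap.ext (LinearMap.ext fun (x : ZMod p) => ?_))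
  change p • x = 0
  rw [nsmul_eq_mul, ZMod.natCast_self, zero_mul]

lemma Complex.units_nsmul_surjective {n : ℕ} (hn : n ≠ 0) :
    Function.Surjective fun u : Additive ℂˣ => n • u := by
  intro u
  obtain ⟨z, hz⟩ := IsAlgClosed.exists_pow_nat_eq (u.toMul : ℂ) (Nat.pos_of_ne_zero hn)
  have hz0 : z ≠ 0 := by
    rintro rfl
    exact u.toMul.ne_zero (by rw [← hz, zero_pow hn])
  refine ⟨Additive.ofMul (Units.mk0 z hz0), Additive.toMul.injective (Units.ext ?_)⟩
  simpa using hz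

section RootsOfUnity

variable {p : ℕ}

lemma rootCoeffHom_natCast (i : ℕ) :
    rootCoeffHom p i = Additive.ofMul (primitiveRootUnit p ^ i) := by
  have h1 : rootCoeffHom p 1 = Additive.ofMul (primitiveRootUnit p) := by
    rw [rootCoeffHom, ← Int.cast_one, ZMod.lift_coe]
    simp
  rw [← nsmul_one, map_nsmul, h1, ofMul_pow]

variable [NeZero p]

lemma isPrimitiveRoot_primitiveRootUnit : IsPrimitiveRoot (primitiveRootUnit p) p :=
  IsPrimitiveRoot.coe_units_iff.mp (Complex.isPrimitiveRoot_exp p (NeZero.ne p))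

lemma rootCoeffHom_injective : Function.Injective (rootCoeffHom p) := by
  rw [injective_iff_map_eq_zero]
  intro a ha
  obtain ⟨i, rfl⟩ := ZMod.natCast_zmod_surjective a
  rw [rootCoeffHom_natCast, ofMul_eq_zero,
    isPrimitiveRoot_primitiveRootUnit.pow_eq_one_iff_dvd] at ha
  exact (ZMod.natCast_eq_zero_iff i p).mpr ha

lemma exists_rootCoeffHom_eq_of_nsmul_eq_zero {u : Additive ℂˣ} (hu : p • u = 0) :
    ∃ a : ZMod p, rootCoeffHom p a = u := by
  have hu' : ((u.toMul : ℂˣ) : ℂ) ^ p = 1 := by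
    rw [← Units.val_pow_eq_pow_val, ← toMul_nsmul, hu, toMul_zero, Units.val_one]
  obtain ⟨i, -, hi⟩ := (Complex.isPrimitiveRoot_exp p (NeZero.ne p)).eq_pow_of_pow_eq_one hu'
  exact ⟨i, by rw [rootCoeffHom_natCast]; exact congrArg Additive.ofMul (Units.ext hi)⟩

end RootsOfUnity

noncomputable def kummerShortComplex (p : ℕ) (Q : Type) [Group Q] : ShortComplex (Rep ℤ Q) where
  X₁ := Rep.trivial ℤ Q (ZMod p)
  X₂ := Rep.trivial ℤ Q (Additive ℂˣ)
  X₃ := Rep.trivial ℤ Q (Additive ℂˣ)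
  f := Rep.ofHom ⟨(rootCoeffHom p).toIntLinearMap, fun _ => rfl⟩
  g := p • 𝟙 _
  zero := by
    refine Rep.hom_ext (Representation.IntertwiningMap.ext (LinearMap.ext fun (x : ZMod p) => ?_))
    change p • rootCoeffHom p x = 0
    rw [← map_nsmul, nsmul_eq_mul, ZMod.natCast_self, zero_mul, map_zero]

lemma kummerShortComplex_shortExact (p : ℕ) [NeZero p] (Q : Type) [Group Q] :
    (kummerShortComplex p Q).ShortExact where
  exact := Rep.exact_of_ker_le_range fun _ hu => exists_rootCoeffHom_eq_of_nsmul_eq_zero hu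
  mono_f := (Rep.mono_iff_injective (kummerShortComplex p Q).f).mpr rootCoeffHom_injective
  epi_g := (Rep.epi_iff_surjective (kummerShortComplex p Q).g).mpr
    (Complex.units_nsmul_surjective (NeZero.ne p))

lemma rootCoeffCochainsMap_eq_cochainsMap (p : ℕ) (Q : Type) [Group Q] :
    rootCoeffCochainsMap p Q = cochainsMap (MonoidHom.id Q) (kummerShortComplex p Q).f :=
  rfl

theorem fourth_cohomology_coefficient_map_injective_general
    (Q : Type) [Group Q] (p : ℕ) (hp : p.Prime)
    [Finite (groupCohomology (Rep.trivial ℤ Q (Additive ℂˣ)) 3)]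
    (hcop : Nat.Coprime
      (Nat.card (groupCohomology (Rep.trivial ℤ Q (Additive ℂˣ)) 3)) p) :
    Function.Injective
      (HomologicalComplex.homologyMap (rootCoeffCochainsMap p Q) 4) := by
  have : NeZero p := ⟨hp.ne_zero⟩
  rw [rootCoeffCochainsMap_eq_cochainsMap]
  exact map_injective_of_coprime_torsion (kummerShortComplex_shortExact p Q)
    (i := 3) rfl hcop (fun _ => card_nsmul_eq_zero')
    (nsmul_eq_zero_of_nsmul_id_eq_zero (Rep.nsmul_id_trivial_zmod_eq_zero p Q) 4)

/-- For a finite group `Q` and a prime `p` such that `H³(Q,ℂˣ)`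
(trivial action) is finite of cardinality coprime to `p`, the induced map
`H⁴(Q, ZMod p) → H⁴(Q, ℂˣ)` on fourth group cohomology (induced by the coefficient
homomorphism `ZMod p → ℂˣ`, `1 ↦ exp(2πi/p)`) is injective (Section 4.2 of the paper).
Here `Hⁿ(Q, M)` is Mathlib's `groupCohomology` of the trivial representation, i.e. the
homology of the inhomogeneous cochain complex, and the induced map is the map on
homology of the cochain map `rootCoeffCochainsMap`. -/
theorem fourth_cohomology_coefficient_map_injective
    (Q : Type) [Group Q] [Finite Q] (p : ℕ) (hp : p.Prime)
    [Finite (groupCohomology (Rep.trivial ℤ Q (Additive ℂˣ)) 3)]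
    (hcop : Nat.Coprime
      (Nat.card (groupCohomology (Rep.trivial ℤ Q (Additive ℂˣ)) 3)) p) :
    Function.Injective
      (HomologicalComplex.homologyMap (rootCoeffCochainsMap p Q) 4) :=
  fourth_cohomology_coefficient_map_injective_general Q p hp hcop
end
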